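/- arXiv:0705.1767 — 5 statements merged into one kernel-verified Lean document; each statement's English description precedes it below -/
import Mathlib

section
/- For the Cauchy location model, b(θ,u) := (2/π) ∫_ℝ [(x−u)/(1+(x−u)²)] · [1/(1+x²)] dx = −2u/(4+u²) for all u ∈ ℝ. -/
/-!
Partial fractions give an explicit primitive of the integrand: a combination of
`log (1 + (x - u) ^ 2) - log (1 + x ^ 2)`, which tends to `0` at `±∞`, and of `arctan (x - u)`
and `arctan x`, which tend to `±π / 2`. The integral is the difference of the limits at `±∞`.
The primitive has coefficients `1 / u`, so `u = 0` is treated separately: the integrand is then odd.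
-/

open MeasureTheory Filter Real Topology Bornology

lemma abs_div_one_add_sq_le_one (y : ℝ) : |y / (1 + y ^ 2)| ≤ 1 := by
  rw [abs_div, abs_of_pos (by positivity : (0 : ℝ) < 1 + y ^ 2), div_le_one (by positivity)]
  nlinarith [sq_nonneg (|y| - 1), sq_abs y]

lemma integrable_score_mul_inv_one_add_sq (u : ℝ) :
    Integrable fun x : ℝ => ((x - u) / (1 + (x - u) ^ 2)) * (1 / (1 + x ^ 2)) := by
  simp only [one_div]
  exact integrable_inv_one_add_sq.bdd_mul (by fun_prop : Measurable _).aestronglyMeasurable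
    (ae_of_all _ fun x => abs_div_one_add_sq_le_one (x - u))

lemma tendsto_log_one_add_sq_sub_shift (u : ℝ) :
    Tendsto (fun x : ℝ => log (1 + (x - u) ^ 2) - log (1 + x ^ 2)) (cobounded ℝ) (𝓝 0) := by
  -- with `t = x⁻¹`, the ratio `(1 + (x - u) ^ 2) / (1 + x ^ 2)` is `hratio` evaluated at `t`
  have hratio : ContinuousAt (fun t : ℝ => (t ^ 2 + (1 - u * t) ^ 2) / (t ^ 2 + 1)) 0 :=
    .div (by fun_prop) (by fun_prop) (by norm_num)
  have := ((continuousAt_log one_ne_zero).tendsto.comp (by simpa using hratio.tendsto)).comp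
    tendsto_inv₀_cobounded
  rw [log_one] at this
  refine this.congr' ?_
  filter_upwards [eventually_ne_cobounded 0] with x hx
  rw [Function.comp_apply, Function.comp_apply, ← log_div (by positivity) (by positivity)]
  congr 1
  field_simp

lemma integral_eq_zero_of_odd {f : ℝ → ℝ} (hf : ∀ x, f (-x) = -f x) : ∫ x, f x = 0 := by
  have h := integral_neg_eq_self f volume
  rw [funext hf, integral_neg] at h
  linarith

lemma hasDerivAt_log_one_add_sq (y : ℝ) :
    HasDerivAt (fun y => log (1 + y ^ 2)) (2 * y / (1 + y ^ 2)) y := by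
  simpa using ((hasDerivAt_pow 2 y).const_add 1).log (by positivity)

noncomputable def cauchyScorePrimitive (u x : ℝ) : ℝ :=
  ((log (1 + (x - u) ^ 2) - log (1 + x ^ 2)) / 2 + 2 / u * arctan (x - u)
    - (u ^ 2 + 2) / u * arctan x) / (u ^ 2 + 4)

lemma hasDerivAt_cauchyScorePrimitive {u : ℝ} (hu : u ≠ 0) (x : ℝ) :
    HasDerivAt (cauchyScorePrimitive u)
      ((x - u) / (1 + (x - u) ^ 2) * (1 / (1 + x ^ 2))) x := by
  have hlog := ((hasDerivAt_log_one_add_sq (x - u)).comp_sub_const x u).sub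
    (hasDerivAt_log_one_add_sq x)
  have harctan := (hasDerivAt_arctan (x - u)).comp_sub_const x u
  refine ((((hlog.div_const 2).add (harctan.const_mul (2 / u))).sub
    ((hasDerivAt_arctan x).const_mul ((u ^ 2 + 2) / u))).div_const (u ^ 2 + 4)).congr_deriv
    (f := cauchyScorePrimitive u) ?_
  field_simp
  ring

lemma tendsto_cauchyScorePrimitive_atTop {u : ℝ} (hu : u ≠ 0) :
    Tendsto (cauchyScorePrimitive u) atTop (𝓝 (-(u * π) / (2 * (u ^ 2 + 4)))) := by
  have hlog := (tendsto_log_one_add_sq_sub_shift u).mono_left IsOrderBornology.atTop_le_cobounded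
  have harctan := tendsto_arctan_atTop.mono_right nhdsWithin_le_nhds
  have hshift : Tendsto (fun x => x - u) atTop atTop := tendsto_atTop_add_const_right _ _ tendsto_id
  convert (((hlog.div_const 2).add ((harctan.comp hshift).const_mul (2 / u))).sub
    (harctan.const_mul ((u ^ 2 + 2) / u))).div_const (u ^ 2 + 4) using 1
  · funext x
    simp [cauchyScorePrimitive]
  · congr 1
    field_simp
    ring

lemma tendsto_cauchyScorePrimitive_atBot {u : ℝ} (hu : u ≠ 0) :
    Tendsto (cauchyScorePrimitive u) atBot (𝓝 (u * π / (2 * (u ^ 2 + 4)))) := by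
  have hlog := (tendsto_log_one_add_sq_sub_shift u).mono_left IsOrderBornology.atBot_le_cobounded
  have harctan := tendsto_arctan_atBot.mono_right nhdsWithin_le_nhds
  have hshift : Tendsto (fun x => x - u) atBot atBot := tendsto_atBot_add_const_right _ _ tendsto_id
  convert (((hlog.div_const 2).add ((harctan.comp hshift).const_mul (2 / u))).sub
    (harctan.const_mul ((u ^ 2 + 2) / u))).div_const (u ^ 2 + 4) using 1
  · funext x
    simp [cauchyScorePrimitive]
  · congr 1
    field_simp
    ring

theorem stmt5 (u : ℝ) :
    (2 / Real.pi) * ∫ x : ℝ, ((x - u) / (1 + (x - u) ^ 2)) * (1 / (1 + x ^ 2))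
      = -(2 * u) / (4 + u ^ 2) := by
  rcases eq_or_ne u 0 with rfl | hu
  · rw [integral_eq_zero_of_odd fun x => by ring]
    simp
  · rw [integral_of_hasDerivAt_of_tendsto (hasDerivAt_cauchyScorePrimitive hu)
      (integrable_score_mul_inv_one_add_sq u) (tendsto_cauchyScorePrimitive_atBot hu)
      (tendsto_cauchyScorePrimitive_atTop hu)]
    field_simp
    ring
end

section
/- For the Cauchy location model, (4/π) ∫_ℝ [(x−u)/(1+(x−u)²)]² · [1/(1+x²)] dx = 2(4+3u²)/(4+u²)² for all u ∈ ℝ. -/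
/-!
For `u ≠ 0`, partial fractions give a primitive of the integrand of the form
`b arctan x + c arctan (x - u) + a log ((1 + x²) / (1 + (x - u)²)) + (p (x - u) + q) / (1 + (x - u)²)`.
Everything but the two arctangents vanishes at infinity, so the integral is `(b + c) π`.
At `u = 0` the coefficients blow up; there the formula follows by continuity in `u` of both sides,
the integral being dominated by `(1 + x²)⁻¹` uniformly in `u`.
-/

open MeasureTheory Filter Real Topology Bornology

theorem tendsto_affine_div_one_add_sq_cobounded (p q : ℝ) :
    Tendsto (fun y : ℝ => (p * y + q) / (1 + y ^ 2)) (cobounded ℝ) (𝓝 0) := by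
  -- divide numerator and denominator by `y ^ 2`
  have hinv := tendsto_inv₀_cobounded (α := ℝ)
  have H := ((hinv.const_mul p).add ((hinv.pow 2).const_mul q)).div ((hinv.pow 2).const_add 1)
    (by norm_num)
  simp only [mul_zero, add_zero, zero_pow two_ne_zero, zero_div] at H
  refine H.congr' ?_
  filter_upwards [eventually_ne_cobounded 0] with y hy
  simp only [Pi.div_apply]
  field_simp
  ring

theorem tendsto_log_one_add_sq_sub_cobounded (u : ℝ) :
    Tendsto (fun x : ℝ => log (1 + x ^ 2) - log (1 + (x - u) ^ 2)) (cobounded ℝ) (𝓝 0) := by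
  have hratio : Tendsto (fun x : ℝ => 1 + (2 * u * (x - u) + u ^ 2) / (1 + (x - u) ^ 2))
      (cobounded ℝ) (𝓝 1) := by
    simpa using ((tendsto_affine_div_one_add_sq_cobounded (2 * u) (u ^ 2)).comp
      (tendsto_sub_const_cobounded u)).const_add 1
  have hlog := (continuousAt_log one_ne_zero).tendsto.comp hratio
  rw [log_one] at hlog
  refine hlog.congr fun x => ?_
  rw [Function.comp_apply, ← log_div (by positivity) (by positivity)]
  congr 1
  field_simp
  ring

theorem integral_eq_of_hasDerivAt_arctan_add {f E : ℝ → ℝ} {b c u : ℝ} (hf : Integrable f)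
    (hE : Tendsto E (cobounded ℝ) (𝓝 0))
    (hderiv : ∀ x, HasDerivAt (fun x => b * arctan x + c * arctan (x - u) + E x) (f x) x) :
    ∫ x, f x = (b + c) * π := by
  have htop : Tendsto (fun x => b * arctan x + c * arctan (x - u) + E x) atTop
      (𝓝 (b * (π / 2) + c * (π / 2) + 0)) := by
    have harctan := tendsto_arctan_atTop.mono_right nhdsWithin_le_nhds
    exact ((harctan.const_mul b).add ((harctan.comp (tendsto_atTop_add_const_right _ (-u)
      tendsto_id)).const_mul c)).add (hE.mono_left IsOrderBornology.atTop_le_cobounded)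
  have hbot : Tendsto (fun x => b * arctan x + c * arctan (x - u) + E x) atBot
      (𝓝 (b * (-(π / 2)) + c * (-(π / 2)) + 0)) := by
    have harctan := tendsto_arctan_atBot.mono_right nhdsWithin_le_nhds
    exact ((harctan.const_mul b).add ((harctan.comp (tendsto_atBot_add_const_right _ (-u)
      tendsto_id)).const_mul c)).add (hE.mono_left IsOrderBornology.atBot_le_cobounded)
  rw [integral_of_hasDerivAt_of_tendsto hderiv hf hbot htop]
  ring

theorem hasDerivAt_arctan_add_log_add_rational (a b c p q u x : ℝ) :
    HasDerivAt (fun x => b * arctan x + c * arctan (x - u)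
        + (a * (log (1 + x ^ 2) - log (1 + (x - u) ^ 2)) + (p * (x - u) + q) / (1 + (x - u) ^ 2)))
      (b / (1 + x ^ 2) + c / (1 + (x - u) ^ 2)
        + (a * (2 * x / (1 + x ^ 2) - 2 * (x - u) / (1 + (x - u) ^ 2))
          + (p * (1 + (x - u) ^ 2) - (p * (x - u) + q) * (2 * (x - u))) / (1 + (x - u) ^ 2) ^ 2)) x := by
  have hshift : HasDerivAt (fun x : ℝ => x - u) 1 x := (hasDerivAt_id x).sub_const u
  have hsq : HasDerivAt (fun x : ℝ => 1 + x ^ 2) (2 * x) x := by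
    simpa using (hasDerivAt_pow 2 x).const_add 1
  have hsq_shift : HasDerivAt (fun x : ℝ => 1 + (x - u) ^ 2) (2 * (x - u)) x := by
    simpa using (hshift.pow 2).const_add 1
  have H := (((hasDerivAt_arctan x).const_mul b).add
    (((hasDerivAt_arctan (x - u)).comp x hshift).const_mul c)).add
    ((((hsq.log (by positivity)).sub (hsq_shift.log (by positivity))).const_mul a).add
      (((hshift.const_mul p).add_const q).div hsq_shift (by positivity)))
  exact H.congr_deriv (by ring)

theorem integral_eq_of_eq_deriv_arctan_add_log_add_rational {f : ℝ → ℝ} (hf : Integrable f)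
    (a b c p q u : ℝ)
    (hfeq : ∀ x, f x = b / (1 + x ^ 2) + c / (1 + (x - u) ^ 2)
        + (a * (2 * x / (1 + x ^ 2) - 2 * (x - u) / (1 + (x - u) ^ 2))
          + (p * (1 + (x - u) ^ 2) - (p * (x - u) + q) * (2 * (x - u))) / (1 + (x - u) ^ 2) ^ 2)) :
    ∫ x, f x = (b + c) * π := by
  have hE : Tendsto (fun x => a * (log (1 + x ^ 2) - log (1 + (x - u) ^ 2))
      + (p * (x - u) + q) / (1 + (x - u) ^ 2)) (cobounded ℝ) (𝓝 0) := by
    simpa using ((tendsto_log_one_add_sq_sub_cobounded u).const_mul a).add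
      ((tendsto_affine_div_one_add_sq_cobounded p q).comp (tendsto_sub_const_cobounded u))
  refine integral_eq_of_hasDerivAt_arctan_add (u := u) hf hE fun x => ?_
  rw [hfeq]
  exact hasDerivAt_arctan_add_log_add_rational a b c p q u x

noncomputable def cauchyScoreSqIntegrand (u x : ℝ) : ℝ :=
  ((x - u) / (1 + (x - u) ^ 2)) ^ 2 * (1 / (1 + x ^ 2))

theorem continuous_cauchyScoreSqIntegrand_apply (x : ℝ) :
    Continuous fun u => cauchyScoreSqIntegrand u x := by
  unfold cauchyScoreSqIntegrand
  fun_prop (disch := intro; positivity)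

theorem continuous_cauchyScoreSqIntegrand (u : ℝ) :
    Continuous (cauchyScoreSqIntegrand u) := by
  unfold cauchyScoreSqIntegrand
  fun_prop (disch := intro; positivity)

theorem norm_cauchyScoreSqIntegrand_le (u x : ℝ) :
    ‖cauchyScoreSqIntegrand u x‖ ≤ (1 + x ^ 2)⁻¹ := by
  have hscore : ((x - u) / (1 + (x - u) ^ 2)) ^ 2 ≤ 1 := by
    rw [div_pow, div_le_one (by positivity)]
    nlinarith [sq_nonneg ((x - u) ^ 2)]
  rw [cauchyScoreSqIntegrand, one_div, Real.norm_of_nonneg (by positivity)]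
  exact mul_le_of_le_one_left (by positivity) hscore

theorem integrable_cauchyScoreSqIntegrand (u : ℝ) : Integrable (cauchyScoreSqIntegrand u) :=
  integrable_inv_one_add_sq.mono' (continuous_cauchyScoreSqIntegrand u).aestronglyMeasurable
    (.of_forall (norm_cauchyScoreSqIntegrand_le u))

theorem continuous_integral_cauchyScoreSqIntegrand :
    Continuous fun u => ∫ x, cauchyScoreSqIntegrand u x :=
  continuous_of_dominated
    (fun u => (continuous_cauchyScoreSqIntegrand u).aestronglyMeasurable)
    (fun u => .of_forall (norm_cauchyScoreSqIntegrand_le u)) integrable_inv_one_add_sq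
    (.of_forall continuous_cauchyScoreSqIntegrand_apply)

theorem integral_cauchyScoreSqIntegrand_of_ne_zero {u : ℝ} (hu : u ≠ 0) :
    ∫ x, cauchyScoreSqIntegrand u x = π * (3 * u ^ 2 + 4) / (2 * (u ^ 2 + 4) ^ 2) := by
  rw [integral_eq_of_eq_deriv_arctan_add_log_add_rational (integrable_cauchyScoreSqIntegrand u)
    ((u ^ 2 + 2) / (u * (u ^ 2 + 4) ^ 2))
    ((u ^ 4 + 3 * u ^ 2 + 4) / (u ^ 2 * (u ^ 2 + 4) ^ 2))
    ((u ^ 2 - 4) * (u ^ 2 + 2) / (2 * u ^ 2 * (u ^ 2 + 4) ^ 2))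
    (-1 / (2 * (u ^ 2 + 4))) (-1 / (u * (u ^ 2 + 4))) u fun x => ?_]
  · field_simp
    ring
  rw [cauchyScoreSqIntegrand]
  field_simp
  ring

theorem integral_cauchyScoreSqIntegrand (u : ℝ) :
    ∫ x, cauchyScoreSqIntegrand u x = π * (3 * u ^ 2 + 4) / (2 * (u ^ 2 + 4) ^ 2) := by
  have hrhs : Continuous fun u : ℝ => π * (3 * u ^ 2 + 4) / (2 * (u ^ 2 + 4) ^ 2) := by
    fun_prop (disch := intro; positivity)
  exact congrFun (continuous_integral_cauchyScoreSqIntegrand.ext_on (dense_compl_singleton 0) hrhs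
    fun u hu => integral_cauchyScoreSqIntegrand_of_ne_zero hu) u

theorem stmt6 (u : ℝ) :
    (4 / Real.pi) * ∫ x : ℝ, ((x - u) / (1 + (x - u) ^ 2)) ^ 2 * (1 / (1 + x ^ 2))
      = 2 * (4 + 3 * u ^ 2) / (4 + u ^ 2) ^ 2 := by
  have h := integral_cauchyScoreSqIntegrand u
  simp only [cauchyScoreSqIntegrand] at h
  rw [h]
  field_simp
  ring
end

section
/- (Robbins–Siegmund) Let (ℱ_n)_{n≥0} be a filtration and X_n, β_n, ξ_n, ζ_n nonnegative ℱ_n-measurable random variables satisfying E[X_n | ℱ_{n−1}] ≤ X_{n−1}(1+β_{n−1}) + ξ_{n−1} − ζ_{n−1} for all sufficiently large n. Then almost surely on the event {∑ ξ_{n−1} < ∞} ∩ {∑ β_{n−1} < ∞}, the limit lim_n X_n exists and is finite and ∑ ζ_{n−1} < ∞. -/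
/-!
Dividing by the predictable products `P n = ∏ k < n, (1 + β k)`, which converge on `{∑ β < ∞}`,
reduces the theorem to the case `β = 0`. There `∑ k < n, ξ k - ∑ k < n, ζ k - X n` is a
submartingale bounded above by the predictable nondecreasing process `∑ k < n, ξ k`. Stopping it
before that process exceeds a level `a` gives a submartingale bounded above by `a + |X 0|`, hence
bounded in `L¹`, hence convergent; on `{∑ ξ ≤ a}` nothing is stopped. Convergence of this
submartingale and of `∑ ξ` then bounds `∑ ζ` (as `X ≥ 0`) and yields the limit of `X`.
-/

open MeasureTheory Filter Finset Topology

lemma sum_range_ite_mul_sub_eq {z A : ℕ → ℝ} {a : ℝ} (hA : Monotone A) {n : ℕ} (hn : A n ≤ a) :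
    ∑ k ∈ range n, (if A (k + 1) ≤ a then 1 else 0) * (z (k + 1) - z k) = z n - z 0 := by
  rw [← sum_range_sub]
  refine sum_congr rfl fun k hk => ?_
  rw [if_pos ((hA (mem_range.1 hk)).trans hn), one_mul]

lemma sum_range_ite_mul_sub_le {z A : ℕ → ℝ} {a : ℝ} (hA : Monotone A) (hz : ∀ n, z n ≤ A n)
    (ha : 0 ≤ a) (n : ℕ) :
    ∑ k ∈ range n, (if A (k + 1) ≤ a then 1 else 0) * (z (k + 1) - z k) ≤ a + |z 0| := by
  induction n with
  | zero => simpa using ha.trans (le_add_of_nonneg_right (abs_nonneg _))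
  | succ n ih =>
    by_cases hn : A (n + 1) ≤ a
    · rw [sum_range_ite_mul_sub_eq hA hn]
      linarith [hz (n + 1), neg_abs_le (z 0)]
    · rwa [sum_range_succ, if_neg hn, zero_mul, add_zero]

lemma exists_tendsto_and_summable_of_tendsto_sum_sub_sum_sub {y ξ ζ : ℕ → ℝ}
    (hy : ∀ n, 0 ≤ y n) (hζ : ∀ n, 0 ≤ ζ n) (hξ : Summable ξ) {c : ℝ}
    (h : Tendsto (fun n => ∑ k ∈ range n, ξ k - ∑ k ∈ range n, ζ k - y n) atTop (𝓝 c)) :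
    (∃ L, Tendsto y atTop (𝓝 L)) ∧ Summable ζ := by
  have hyB : Tendsto (fun n => ∑ k ∈ range n, ζ k + y n) atTop (𝓝 (∑' k, ξ k - c)) :=
    (hξ.hasSum.tendsto_sum_nat.sub h).congr fun n => by ring
  obtain ⟨M, hM⟩ := hyB.bddAbove_range
  have hζs : Summable ζ := summable_of_sum_range_le hζ fun n =>
    (le_add_of_nonneg_right (hy n)).trans (hM ⟨n, rfl⟩)
  exact ⟨⟨_, (hyB.sub hζs.hasSum.tendsto_sum_nat).congr fun n => by ring⟩, hζs⟩

lemma exists_tendsto_and_summable_of_prod_one_add_inv_mul {x β ζ : ℕ → ℝ}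
    (hβ0 : ∀ n, 0 ≤ β n) (hβ : Summable β) (hζ0 : ∀ n, 0 ≤ ζ n)
    (hx : ∃ L, Tendsto (fun n => (∏ k ∈ range n, (1 + β k))⁻¹ * x n) atTop (𝓝 L))
    (hζ : Summable fun n => (∏ k ∈ range (n + 1), (1 + β k))⁻¹ * ζ n) :
    (∃ L, Tendsto x atTop (𝓝 L)) ∧ Summable ζ := by
  set P : ℕ → ℝ := fun n => ∏ k ∈ range n, (1 + β k)
  have hP0 : ∀ n, 0 < P n := fun n => prod_pos fun k _ => by linarith [hβ0 k]
  have hPmono : Monotone P := monotone_nat_of_le_succ fun n => by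
    simp only [P, prod_range_succ]
    exact le_mul_of_one_le_right (hP0 n).le (le_add_of_nonneg_right (hβ0 n))
  have hPlim : Tendsto P atTop (𝓝 (∏' k, (1 + β k))) :=
    (Real.multipliable_one_add_of_summable hβ).hasProd.tendsto_prod_nat
  have hcancel : ∀ n y, P n * ((P n)⁻¹ * y) = y := fun n y => by
    rw [← mul_assoc, mul_inv_cancel₀ (hP0 n).ne', one_mul]
  obtain ⟨L, hL⟩ := hx
  refine ⟨⟨_, (hPlim.mul hL).congr fun n => hcancel n (x n)⟩, ?_⟩
  refine (hζ.mul_left (∏' k, (1 + β k))).of_nonneg_of_le hζ0 fun n => ?_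
  calc ζ n = P (n + 1) * ((P (n + 1))⁻¹ * ζ n) := (hcancel _ _).symm
    _ ≤ _ := mul_le_mul_of_nonneg_right (hPmono.ge_of_tendsto hPlim (n + 1))
        (mul_nonneg (inv_nonneg.2 (hP0 _).le) (hζ0 n))

namespace MeasureTheory

variable {Ω : Type*} {m0 : MeasurableSpace Ω} {μ : Measure Ω} {ℱ : Filtration ℕ m0}

theorem Submartingale.exists_ae_tendsto_of_ae_le [IsFiniteMeasure μ] {f : ℕ → Ω → ℝ}
    {G : Ω → ℝ} (hf : Submartingale f ℱ μ) (hG : Integrable G μ) (hle : ∀ n, f n ≤ᵐ[μ] G) :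
    ∀ᵐ ω ∂μ, ∃ c, Tendsto (fun n => f n ω) atTop (𝓝 c) := by
  have hnorm : ∀ n, ∫ ω, ‖f n ω‖ ∂μ ≤ 2 * ∫ ω, |G ω| ∂μ - ∫ ω, f 0 ω ∂μ := fun n => by
    have hmono : ∫ ω, f 0 ω ∂μ ≤ ∫ ω, f n ω ∂μ := by
      simpa using hf.setIntegral_le (Nat.zero_le n) MeasurableSet.univ
    calc ∫ ω, ‖f n ω‖ ∂μ ≤ ∫ ω, (2 * |G ω| - f n ω) ∂μ := by
          refine integral_mono_ae (hf.integrable n).norm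
            ((hG.abs.const_mul 2).sub (hf.integrable n)) ?_
          filter_upwards [hle n] with ω hω
          rw [Real.norm_eq_abs, abs_le']
          constructor <;> linarith [le_abs_self (G ω), neg_abs_le (G ω)]
      _ = 2 * ∫ ω, |G ω| ∂μ - ∫ ω, f n ω ∂μ := by
          rw [integral_sub (hG.abs.const_mul 2) (hf.integrable n), integral_const_mul]
      _ ≤ _ := by linarith
  refine hf.exists_ae_tendsto_of_bdd
    (R := (2 * ∫ ω, |G ω| ∂μ - ∫ ω, f 0 ω ∂μ).toNNReal) fun n => ?_
  rw [eLpNorm_one_eq_lintegral_enorm, ← ofReal_integral_norm_eq_lintegral_enorm (hf.integrable n)]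
  exact ENNReal.ofReal_le_ofReal (hnorm n)

theorem Submartingale.ae_exists_tendsto_of_le_predictable [IsFiniteMeasure μ]
    {f A : ℕ → Ω → ℝ} (hf : Submartingale f ℱ μ) (hA : StronglyAdapted ℱ fun n => A (n + 1))
    (hAmono : ∀ ω, Monotone fun n => A n ω) (hle : ∀ n ω, f n ω ≤ A n ω) :
    ∀ᵐ ω ∂μ, BddAbove (Set.range fun n => A n ω) →
      ∃ c, Tendsto (fun n => f n ω) atTop (𝓝 c) := by
  -- the transform of `f` by the predictable indicator of `{A (k + 1) ≤ a}` is `f` stopped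
  -- just before `A` exceeds `a`, shifted by `- f 0`
  set T : ℕ → ℕ → Ω → ℝ := fun a n ω =>
    ∑ k ∈ range n, (if A (k + 1) ω ≤ a then 1 else 0) * (f (k + 1) ω - f k ω)
  have hT : ∀ a : ℕ, Submartingale (T a) ℱ μ := fun a => by
    convert hf.sum_mul_sub (R := 1) (ξ := fun k ω => if A (k + 1) ω ≤ a then 1 else 0)
      (fun k => stronglyMeasurable_const.ite
        (measurableSet_le (hA k).measurable measurable_const) stronglyMeasurable_const)
      (fun k ω => by split_ifs <;> norm_num) (fun k ω => by split_ifs <;> norm_num) using 1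
    ext n ω
    simp [T, Finset.sum_apply]
  have hconv : ∀ᵐ ω ∂μ, ∀ a : ℕ, ∃ c, Tendsto (fun n => T a n ω) atTop (𝓝 c) :=
    ae_all_iff.2 fun a => (hT a).exists_ae_tendsto_of_ae_le (G := fun ω => a + |f 0 ω|)
      ((integrable_const _).add (hf.integrable 0).abs) fun n => ae_of_all _ fun ω =>
        sum_range_ite_mul_sub_le (hAmono ω) (fun n => hle n ω) a.cast_nonneg n
  filter_upwards [hconv] with ω hω ⟨M, hM⟩
  obtain ⟨c, hc⟩ := hω ⌈M⌉₊
  have hAM : ∀ n, A n ω ≤ ⌈M⌉₊ := fun n => (hM ⟨n, rfl⟩).trans (Nat.le_ceil M)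
  refine ⟨c + f 0 ω, (hc.add_const (f 0 ω)).congr fun n => ?_⟩
  rw [show T _ n ω = f n ω - f 0 ω from
    sum_range_ite_mul_sub_eq (z := (f · ω)) (hAmono ω) (hAM n), sub_add_cancel]

lemma submartingale_sum_sub_sum_sub [IsFiniteMeasure μ] {Y ξ ζ : ℕ → Ω → ℝ}
    (hY : StronglyAdapted ℱ Y) (hξ : StronglyAdapted ℱ ξ) (hζ : StronglyAdapted ℱ ζ)
    (hYint : ∀ n, Integrable (Y n) μ) (hξint : ∀ n, Integrable (ξ n) μ)
    (hζint : ∀ n, Integrable (ζ n) μ)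
    (hrec : ∀ n, ∀ᵐ ω ∂μ, μ[Y (n + 1) | ℱ n] ω ≤ Y n ω + ξ n ω - ζ n ω) :
    Submartingale (fun n => ∑ k ∈ range n, ξ k - ∑ k ∈ range n, ζ k - Y n) ℱ μ := by
  have hpred : ∀ m n, m ≤ n + 1 → StronglyMeasurable[ℱ n]
      (∑ k ∈ range m, ξ k - ∑ k ∈ range m, ζ k) := fun m n hmn =>
    have hk : ∀ k ∈ range m, k ≤ n := fun k hk => by have := mem_range.1 hk; omega
    (stronglyMeasurable_sum _ fun k h => (hξ k).mono (ℱ.mono (hk k h))).sub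
      (stronglyMeasurable_sum _ fun k h => (hζ k).mono (ℱ.mono (hk k h)))
  have hint : ∀ n, Integrable (∑ k ∈ range n, ξ k - ∑ k ∈ range n, ζ k) μ := fun n =>
    (integrable_finsetSum' _ fun k _ => hξint k).sub (integrable_finsetSum' _ fun k _ => hζint k)
  refine submartingale_nat (fun n => (hpred n n n.le_succ).sub (hY n))
    (fun n => (hint n).sub (hYint n)) fun n => ?_
  filter_upwards [hrec n, condExp_sub (hint (n + 1)) (hYint (n + 1)) (ℱ n)] with ω hω hsub
  rw [hsub, Pi.sub_apply, condExp_of_stronglyMeasurable (ℱ.le n) (hpred _ n le_rfl) (hint (n + 1))]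
  simp only [Pi.sub_apply, Pi.add_apply, sum_range_succ]
  linarith

theorem ae_exists_tendsto_and_summable_of_condExp_le_add_sub [IsFiniteMeasure μ]
    {Y ξ ζ : ℕ → Ω → ℝ} (hY : StronglyAdapted ℱ Y) (hξ : StronglyAdapted ℱ ξ)
    (hζ : StronglyAdapted ℱ ζ) (hYint : ∀ n, Integrable (Y n) μ)
    (hξint : ∀ n, Integrable (ξ n) μ) (hζint : ∀ n, Integrable (ζ n) μ)
    (hY0 : ∀ n ω, 0 ≤ Y n ω) (hξ0 : ∀ n ω, 0 ≤ ξ n ω) (hζ0 : ∀ n ω, 0 ≤ ζ n ω)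
    (hrec : ∀ n, ∀ᵐ ω ∂μ, μ[Y (n + 1) | ℱ n] ω ≤ Y n ω + ξ n ω - ζ n ω) :
    ∀ᵐ ω ∂μ, (Summable fun n => ξ n ω) →
      (∃ L, Tendsto (fun n => Y n ω) atTop (𝓝 L)) ∧ Summable fun n => ζ n ω := by
  have hconv := (submartingale_sum_sub_sum_sub hY hξ hζ hYint hξint hζint
    hrec).ae_exists_tendsto_of_le_predictable (A := fun n => ∑ k ∈ range n, ξ k)
    (fun n => stronglyMeasurable_sum _ fun k hk => (hξ k).mono (ℱ.mono (mem_range_succ_iff.1 hk)))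
    (fun ω => monotone_nat_of_le_succ fun n => by simpa [sum_range_succ] using hξ0 n ω)
    (fun n ω => by
      simp only [Pi.sub_apply, Finset.sum_apply]
      linarith [sum_nonneg fun k (_ : k ∈ range n) => hζ0 k ω, hY0 n ω])
  filter_upwards [hconv] with ω hω hξs
  have hbdd : BddAbove (Set.range fun n => (∑ k ∈ range n, ξ k) ω) := by
    refine ⟨∑' k, ξ k ω, ?_⟩
    rintro _ ⟨n, rfl⟩
    simpa using hξs.sum_le_tsum (range n) fun k _ => hξ0 k ω
  obtain ⟨c, hc⟩ := hω hbdd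
  exact exists_tendsto_and_summable_of_tendsto_sum_sub_sum_sub (hY0 · ω) (hζ0 · ω) hξs
    (by simpa [Finset.sum_apply] using hc)

theorem ae_exists_tendsto_and_summable_of_condExp_le_mul_add_sub [IsFiniteMeasure μ]
    {X β ξ ζ : ℕ → Ω → ℝ} (hX : StronglyAdapted ℱ X) (hβ : StronglyAdapted ℱ β)
    (hξ : StronglyAdapted ℱ ξ) (hζ : StronglyAdapted ℱ ζ) (hXint : ∀ n, Integrable (X n) μ)
    (hξint : ∀ n, Integrable (ξ n) μ) (hζint : ∀ n, Integrable (ζ n) μ)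
    (hX0 : ∀ n ω, 0 ≤ X n ω) (hβ0 : ∀ n ω, 0 ≤ β n ω) (hξ0 : ∀ n ω, 0 ≤ ξ n ω)
    (hζ0 : ∀ n ω, 0 ≤ ζ n ω)
    (hrec : ∀ n, ∀ᵐ ω ∂μ, μ[X (n + 1) | ℱ n] ω ≤ X n ω * (1 + β n ω) + ξ n ω - ζ n ω) :
    ∀ᵐ ω ∂μ, (Summable fun n => ξ n ω) → (Summable fun n => β n ω) →
      (∃ L, Tendsto (fun n => X n ω) atTop (𝓝 L)) ∧ Summable fun n => ζ n ω := by
  set P : ℕ → Ω → ℝ := fun n ω => ∏ k ∈ range n, (1 + β k ω)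
  have hP1 : ∀ n ω, 1 ≤ P n ω := fun n ω =>
    Finset.one_le_prod fun k _ => le_add_of_nonneg_right (hβ0 k ω)
  have hPsucc : ∀ n ω, P (n + 1) ω = P n ω * (1 + β n ω) := fun n ω => prod_range_succ _ _
  have hPinv : ∀ m n, m ≤ n + 1 → StronglyMeasurable[ℱ n] fun ω => (P m ω)⁻¹ := fun m n hmn =>
    have hk : ∀ k ∈ range m, k ≤ n := fun k hk => by have := mem_range.1 hk; omega
    (Measurable.inv (Finset.measurable_prod _ fun k h =>
      measurable_const.add ((hβ k).mono (ℱ.mono (hk k h))).measurable)).stronglyMeasurable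
  have hPinv_le : ∀ n ω, ‖(P n ω)⁻¹‖ ≤ 1 := fun n ω => by
    rw [norm_inv, Real.norm_of_nonneg (zero_le_one.trans (hP1 n ω))]
    exact inv_le_one_of_one_le₀ (hP1 n ω)
  have hint : ∀ {f : Ω → ℝ} m, Integrable f μ → Integrable (fun ω => (P m ω)⁻¹ * f ω) μ :=
    fun m hf => hf.bdd_mul ((hPinv m m m.le_succ).mono (ℱ.le m)).aestronglyMeasurable
      (ae_of_all _ (hPinv_le m))
  have hPinv0 : ∀ n ω, 0 ≤ (P n ω)⁻¹ := fun n ω => inv_nonneg.2 (zero_le_one.trans (hP1 n ω))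
  have hnormalized := ae_exists_tendsto_and_summable_of_condExp_le_add_sub
    (Y := fun n ω => (P n ω)⁻¹ * X n ω) (ξ := fun n ω => (P (n + 1) ω)⁻¹ * ξ n ω)
    (ζ := fun n ω => (P (n + 1) ω)⁻¹ * ζ n ω)
    (fun n => (hPinv n n n.le_succ).mul (hX n)) (fun n => (hPinv _ n le_rfl).mul (hξ n))
    (fun n => (hPinv _ n le_rfl).mul (hζ n)) (fun n => hint n (hXint n))
    (fun n => hint (n + 1) (hξint n)) (fun n => hint (n + 1) (hζint n))
    (fun n ω => mul_nonneg (hPinv0 n ω) (hX0 n ω))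
    (fun n ω => mul_nonneg (hPinv0 _ ω) (hξ0 n ω)) (fun n ω => mul_nonneg (hPinv0 _ ω) (hζ0 n ω))
    fun n => by
      filter_upwards [hrec n, condExp_mul_of_stronglyMeasurable_left (hPinv (n + 1) n le_rfl)
        (hint (n + 1) (hXint (n + 1))) (hXint (n + 1))] with ω hω hmul
      have hpull : μ[fun ω => (P (n + 1) ω)⁻¹ * X (n + 1) ω | ℱ n] ω
          = (P (n + 1) ω)⁻¹ * μ[X (n + 1) | ℱ n] ω := hmul
      have hP0 : P n ω ≠ 0 := (zero_lt_one.trans_le (hP1 n ω)).ne'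
      have hβ1 : 1 + β n ω ≠ 0 := by linarith [hβ0 n ω]
      calc _ = (P (n + 1) ω)⁻¹ * μ[X (n + 1) | ℱ n] ω := hpull
        _ ≤ (P (n + 1) ω)⁻¹ * (X n ω * (1 + β n ω) + ξ n ω - ζ n ω) :=
          mul_le_mul_of_nonneg_left hω (hPinv0 _ ω)
        _ = _ := by rw [hPsucc]; field_simp
  filter_upwards [hnormalized] with ω h hξs hβs
  have hξ's : Summable fun n => (P (n + 1) ω)⁻¹ * ξ n ω := hξs.of_nonneg_of_le
    (fun n => mul_nonneg (hPinv0 _ ω) (hξ0 n ω))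
    fun n => mul_le_of_le_one_left (hξ0 n ω) (inv_le_one_of_one_le₀ (hP1 _ ω))
  obtain ⟨hx, hζ's⟩ := h hξ's
  exact exists_tendsto_and_summable_of_prod_one_add_inv_mul (hβ0 · ω) hβs (hζ0 · ω) hx hζ's

def Filtration.shift (ℱ : Filtration ℕ m0) (N : ℕ) : Filtration ℕ m0 where
  seq n := ℱ (n + N)
  mono' _ _ h := ℱ.mono (Nat.add_le_add_right h N)
  le' n := ℱ.le (n + N)

end MeasureTheory

theorem stmt9_general {Ω : Type*} {m0 : MeasurableSpace Ω} {μ : Measure Ω} [IsProbabilityMeasure μ]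
    (ℱ : Filtration ℕ m0) (X β ξ ζ : ℕ → Ω → ℝ)
    (hXmeas : ∀ n, StronglyMeasurable[ℱ n] (X n))
    (hβmeas : ∀ n, StronglyMeasurable[ℱ n] (β n))
    (hξmeas : ∀ n, StronglyMeasurable[ℱ n] (ξ n))
    (hζmeas : ∀ n, StronglyMeasurable[ℱ n] (ζ n))
    (hXint : ∀ n, Integrable (X n) μ)
    (hξint : ∀ n, Integrable (ξ n) μ) (hζint : ∀ n, Integrable (ζ n) μ)
    (hX0 : ∀ n ω, 0 ≤ X n ω) (hβ0 : ∀ n ω, 0 ≤ β n ω)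
    (hξ0 : ∀ n ω, 0 ≤ ξ n ω) (hζ0 : ∀ n ω, 0 ≤ ζ n ω)
    (hrec : ∀ᶠ n in atTop, ∀ᵐ ω ∂μ,
      (μ[X (n + 1) | ℱ n]) ω ≤ X n ω * (1 + β n ω) + ξ n ω - ζ n ω) :
    ∀ᵐ ω ∂μ, (Summable fun n => ξ n ω) → (Summable fun n => β n ω) →
      (∃ L : ℝ, Tendsto (fun n => X n ω) atTop (nhds L)) ∧ Summable fun n => ζ n ω := by
  obtain ⟨N, hN⟩ := eventually_atTop.1 hrec
  have hshifted := ae_exists_tendsto_and_summable_of_condExp_le_mul_add_sub (ℱ := ℱ.shift N)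
    (X := fun n => X (n + N)) (β := fun n => β (n + N)) (ξ := fun n => ξ (n + N))
    (ζ := fun n => ζ (n + N))
    (fun n => hXmeas (n + N)) (fun n => hβmeas (n + N)) (fun n => hξmeas (n + N))
    (fun n => hζmeas (n + N)) (fun n => hXint (n + N)) (fun n => hξint (n + N))
    (fun n => hζint (n + N)) (fun n => hX0 (n + N)) (fun n => hβ0 (n + N))
    (fun n => hξ0 (n + N)) (fun n => hζ0 (n + N))
    fun n => by rw [Nat.add_right_comm n 1 N]; exact hN (n + N) (Nat.le_add_left N n)
  filter_upwards [hshifted] with ω h hξs hβs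
  obtain ⟨⟨L, hL⟩, hζs⟩ := h ((summable_nat_add_iff N).2 hξs) ((summable_nat_add_iff N).2 hβs)
  exact ⟨⟨L, (tendsto_add_atTop_iff_nat N).1 hL⟩, (summable_nat_add_iff N).1 hζs⟩

theorem stmt9 {Ω : Type*} {m0 : MeasurableSpace Ω} {μ : Measure Ω} [IsProbabilityMeasure μ]
    (ℱ : Filtration ℕ m0) (X β ξ ζ : ℕ → Ω → ℝ)
    (hXmeas : ∀ n, StronglyMeasurable[ℱ n] (X n))
    (hβmeas : ∀ n, StronglyMeasurable[ℱ n] (β n))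
    (hξmeas : ∀ n, StronglyMeasurable[ℱ n] (ξ n))
    (hζmeas : ∀ n, StronglyMeasurable[ℱ n] (ζ n))
    (hXint : ∀ n, Integrable (X n) μ) (hβint : ∀ n, Integrable (β n) μ)
    (hξint : ∀ n, Integrable (ξ n) μ) (hζint : ∀ n, Integrable (ζ n) μ)
    (hX0 : ∀ n ω, 0 ≤ X n ω) (hβ0 : ∀ n ω, 0 ≤ β n ω)
    (hξ0 : ∀ n ω, 0 ≤ ξ n ω) (hζ0 : ∀ n ω, 0 ≤ ζ n ω)
    (hrec : ∀ᶠ n in atTop, ∀ᵐ ω ∂μ,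
      (μ[X (n + 1) | ℱ n]) ω ≤ X n ω * (1 + β n ω) + ξ n ω - ζ n ω) :
    ∀ᵐ ω ∂μ, (Summable fun n => ξ n ω) → (Summable fun n => β n ω) →
      (∃ L : ℝ, Tendsto (fun n => X n ω) atTop (nhds L)) ∧ Summable fun n => ζ n ω :=
  stmt9_general ℱ X β ξ ζ hXmeas hβmeas hξmeas hζmeas hXint hξint hζint hX0 hβ0 hξ0 hζ0 hrec
end

section
/- Suppose for each t, a_t > 0 is nondecreasing with a_t → ∞, Δa_t/a_{t−1} → 0, and λ_t, η_t are real sequences with η_t = Δa_t/a_t − λ_t and ∑_t [η_t]^+ < ∞. Fix δ ∈ (0,1/2) and set r_t = (a_t/a_{t−1})^{2δ}(1 − λ_t) − 1. Then ∑_t [r_t]^+ < ∞. -/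
/-! Writing `ρ = a (t+1) / a t ≥ 1`, the hypothesis on `η` says `1 - λ = ρ⁻¹ + η`, so
`ρ^{2δ}(1 - λ) - 1 = (ρ^{2δ-1} - 1) + ρ^{2δ} η ≤ ρ [η]^+` because `2δ ≤ 1`.
The ratios `ρ` are bounded since `Δa_t / a_t → 0`, so `∑ [r_t]^+` is dominated by a multiple
of `∑ [η_t]^+`. -/

open Filter

lemma max_rpow_mul_inv_add_sub_one_le {ρ p : ℝ} (hρ : 1 ≤ ρ) (hp : p ≤ 1) (x : ℝ) :
    max (ρ ^ p * (ρ⁻¹ + x) - 1) 0 ≤ ρ * max x 0 := by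
  have hρ0 : 0 < ρ := by linarith
  have hinv : ρ ^ p * ρ⁻¹ ≤ 1 := by
    rw [← Real.rpow_neg_one, ← Real.rpow_add hρ0]
    exact Real.rpow_le_one_of_one_le_of_nonpos hρ (by linarith)
  have hpow : ρ ^ p ≤ ρ := by
    simpa using Real.rpow_le_rpow_of_exponent_le hρ hp
  have hx : ρ ^ p * x ≤ ρ ^ p * max x 0 :=
    mul_le_mul_of_nonneg_left (le_max_left x 0) (Real.rpow_nonneg hρ0.le p)
  refine max_le ?_ (by positivity)
  calc ρ ^ p * (ρ⁻¹ + x) - 1 ≤ ρ ^ p * max x 0 := by rw [mul_add]; linarith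
    _ ≤ ρ * max x 0 := mul_le_mul_of_nonneg_right hpow (le_max_right x 0)

theorem stmt11_general {δ : ℝ} (hδ' : δ < 1 / 2)
    (a lam : ℕ → ℝ) (hpos : ∀ t, 0 < a t) (hmono : Monotone a)
    (hratio : Tendsto (fun t => (a (t + 1) - a t) / a t) atTop (nhds 0))
    (η : ℕ → ℝ) (hη : ∀ t, η t = (a (t + 1) - a t) / a (t + 1) - lam t)
    (hsum : Summable fun t => max (η t) 0) :
    Summable fun t => max ((a (t + 1) / a t) ^ (2 * δ) * (1 - lam t) - 1) 0 := by
  obtain ⟨C, hC⟩ := hratio.bddAbove_range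
  refine (hsum.mul_left (1 + C)).of_nonneg_of_le (fun t => le_max_right _ _) fun t => ?_
  have hne : a t ≠ 0 := (hpos t).ne'
  have hne' : a (t + 1) ≠ 0 := (hpos (t + 1)).ne'
  have hρ_one : 1 ≤ a (t + 1) / a t := (one_le_div (hpos t)).2 (hmono t.le_succ)
  have hρ_le : a (t + 1) / a t ≤ 1 + C := by
    have : a (t + 1) / a t = 1 + (a (t + 1) - a t) / a t := by field_simp; ring
    linarith [hC ⟨t, rfl⟩]
  have hlam : 1 - lam t = (a (t + 1) / a t)⁻¹ + η t := by
    rw [hη, inv_div]; field_simp; ring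
  calc _ ≤ a (t + 1) / a t * max (η t) 0 := by
        rw [hlam]; exact max_rpow_mul_inv_add_sub_one_le hρ_one (by linarith) (η t)
    _ ≤ (1 + C) * max (η t) 0 := mul_le_mul_of_nonneg_right hρ_le (le_max_right _ _)

theorem stmt11 {δ : ℝ} (hδ : 0 < δ) (hδ' : δ < 1 / 2)
    (a lam : ℕ → ℝ) (hpos : ∀ t, 0 < a t) (hmono : Monotone a)
    (htop : Tendsto a atTop atTop)
    (hratio : Tendsto (fun t => (a (t + 1) - a t) / a t) atTop (nhds 0))
    (η : ℕ → ℝ) (hη : ∀ t, η t = (a (t + 1) - a t) / a (t + 1) - lam t)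
    (hsum : Summable fun t => max (η t) 0) :
    Summable fun t => max ((a (t + 1) / a t) ^ (2 * δ) * (1 - lam t) - 1) 0 :=
  stmt11_general hδ' a lam hpos hmono hratio η hη hsum
end

section
/- Let γ : ℝ → ℝ be twice continuously differentiable with γ̈ > 0, and suppose there is B > 0 with (1 + γ̇(u)²)/γ̈(u)² ≤ B(1+u²) for all u. Then there exists a constant B̃ > 0 (depending on θ) such that for all u ≠ 0, |(γ̇(θ) − γ̇(θ+u))/(u·γ̈(θ+u))| ≤ B̃·max(1, √(1/u² + 1)). -/
/-!
Near `u = 0` the mean value theorem bounds `|γ̇(θ) - γ̇(θ+u)|` by `|u| · max γ̈` over a compact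
neighbourhood of `θ`, while `γ̈(θ+u)` stays above the positive minimum of `γ̈` there. For `|u| ≥ 1`
the growth condition gives `(γ̇(θ) - γ̇(θ+u))² ≤ 2 (1 + γ̇(θ)²) B (1 + (θ+u)²) γ̈(θ+u)²`, and
`1 + (θ+u)² ≤ (3 + 2θ²) u²`. So the quotient is bounded, and `max 1 (…) ≥ 1` absorbs the rest.
-/

open Metric

lemma exists_abs_sub_div_mul_deriv_le_of_abs_le {f : ℝ → ℝ} (hf : Differentiable ℝ f)
    (hf' : Continuous (deriv f)) (hpos : ∀ x, 0 < deriv f x) (θ r : ℝ) :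
    ∃ C, ∀ u, u ≠ 0 → |u| ≤ r → |(f θ - f (θ + u)) / (u * deriv f (θ + u))| ≤ C := by
  obtain ⟨M, hM⟩ := (isCompact_closedBall θ r).exists_bound_of_continuousOn hf'.continuousOn
  obtain ⟨m, hm, hm_le⟩ :=
    (isCompact_closedBall θ r).exists_forall_le' hf'.continuousOn fun x _ ↦ hpos x
  refine ⟨M / m, fun u hu hur ↦ ?_⟩
  have hθu : θ + u ∈ closedBall θ r := by simpa [Real.dist_eq] using hur
  have hθ : θ ∈ closedBall θ r := mem_closedBall_self ((abs_nonneg u).trans hur)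
  have hlip : |f θ - f (θ + u)| ≤ M * |u| := by
    simpa [Real.norm_eq_abs] using (convex_closedBall θ r).norm_image_sub_le_of_norm_deriv_le
      (fun x _ ↦ hf x) hM hθu hθ
  have hu' : 0 < |u| := abs_pos.mpr hu
  rw [abs_div, abs_mul, abs_of_pos (hpos _), div_le_div_iff₀ (mul_pos hu' (hpos _)) hm]
  have hM0 : 0 ≤ M := (norm_nonneg _).trans (hM θ hθ)
  calc |f θ - f (θ + u)| * m ≤ M * |u| * m := by gcongr
    _ ≤ M * |u| * deriv f (θ + u) := by gcongr; exact hm_le _ hθu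
    _ = M * (|u| * deriv f (θ + u)) := mul_assoc _ _ _

lemma abs_sub_div_mul_le_of_one_le_abs {f g : ℝ → ℝ} {B : ℝ}
    (hbound : ∀ x, (1 + f x ^ 2) / g x ^ 2 ≤ B * (1 + x ^ 2)) (θ : ℝ) {u : ℝ} (hu : 1 ≤ |u|) :
    |(f θ - f (θ + u)) / (u * g (θ + u))| ≤ √(2 * (1 + f θ ^ 2) * B * (3 + 2 * θ ^ 2)) := by
  set a := f θ
  set b := f (θ + u)
  set c := g (θ + u)
  rcases eq_or_ne c 0 with hc | hc
  · simp [hc]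
  have hc2 : 0 < c ^ 2 := by positivity
  have hb : 1 + b ^ 2 ≤ B * (1 + (θ + u) ^ 2) * c ^ 2 := (div_le_iff₀ hc2).mp (hbound _)
  have hB : 0 ≤ B := by
    by_contra! hB
    nlinarith [mul_neg_of_neg_of_pos hB (by positivity : 0 < (1 + (θ + u) ^ 2) * c ^ 2)]
  have hu2 : 1 ≤ u ^ 2 := (one_le_sq_iff_one_le_abs u).mpr hu
  have hgrowth : 1 + (θ + u) ^ 2 ≤ (3 + 2 * θ ^ 2) * u ^ 2 := by
    nlinarith [sq_nonneg (θ - u), mul_nonneg (sub_nonneg.mpr hu2) (sq_nonneg θ)]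
  have hsub : (a - b) ^ 2 ≤ 2 * (1 + a ^ 2) * (1 + b ^ 2) := by
    nlinarith [sq_nonneg (a + b), mul_nonneg (sq_nonneg a) (sq_nonneg b)]
  apply Real.abs_le_sqrt
  rw [div_pow, mul_pow, div_le_iff₀ (by positivity)]
  calc (a - b) ^ 2 ≤ 2 * (1 + a ^ 2) * (1 + b ^ 2) := hsub
    _ ≤ 2 * (1 + a ^ 2) * (B * (1 + (θ + u) ^ 2) * c ^ 2) := by gcongr
    _ ≤ 2 * (1 + a ^ 2) * (B * ((3 + 2 * θ ^ 2) * u ^ 2) * c ^ 2) := by gcongr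
    _ = 2 * (1 + a ^ 2) * B * (3 + 2 * θ ^ 2) * (u ^ 2 * c ^ 2) := by ring

theorem stmt17_general (γ : ℝ → ℝ) (hγ : ContDiff ℝ 2 γ)
    (hpos : ∀ u, 0 < deriv (deriv γ) u)
    (B : ℝ)
    (hbound : ∀ u, (1 + deriv γ u ^ 2) / (deriv (deriv γ) u) ^ 2 ≤ B * (1 + u ^ 2))
    (θ : ℝ) :
    ∃ Bt > (0 : ℝ), ∀ u : ℝ, u ≠ 0 →
      |(deriv γ θ - deriv γ (θ + u)) / (u * deriv (deriv γ) (θ + u))|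
        ≤ Bt * max 1 (Real.sqrt (1 / u ^ 2 + 1)) := by
  obtain ⟨C, hC⟩ := exists_abs_sub_div_mul_deriv_le_of_abs_le hγ.differentiable_deriv_two
    (ContDiff.deriv' (n := 1) hγ).continuous_deriv_one hpos θ 1
  set Bt := max (max C √(2 * (1 + deriv γ θ ^ 2) * B * (3 + 2 * θ ^ 2))) 1
  refine ⟨Bt, by positivity, fun u hu ↦ ?_⟩
  have hbounded : |(deriv γ θ - deriv γ (θ + u)) / (u * deriv (deriv γ) (θ + u))| ≤ Bt := by
    rcases le_total |u| 1 with hsmall | hlarge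
    · exact (hC u hu hsmall).trans ((le_max_left _ _).trans (le_max_left _ _))
    · exact (abs_sub_div_mul_le_of_one_le_abs hbound θ hlarge).trans
        ((le_max_right _ _).trans (le_max_left _ _))
  exact hbounded.trans (le_mul_of_one_le_right (by positivity) (le_max_left _ _))

theorem stmt17 (γ : ℝ → ℝ) (hγ : ContDiff ℝ 2 γ)
    (hpos : ∀ u, 0 < deriv (deriv γ) u)
    (B : ℝ) (hB : 0 < B)
    (hbound : ∀ u, (1 + deriv γ u ^ 2) / (deriv (deriv γ) u) ^ 2 ≤ B * (1 + u ^ 2))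
    (θ : ℝ) :
    ∃ Bt > (0 : ℝ), ∀ u : ℝ, u ≠ 0 →
      |(deriv γ θ - deriv γ (θ + u)) / (u * deriv (deriv γ) (θ + u))|
        ≤ Bt * max 1 (Real.sqrt (1 / u ^ 2 + 1)) :=
  stmt17_general γ hγ hpos B hbound θ
end
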